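/- The map D satisfies D ∘ D = 0 on T, and D maps the subspace W into itself; consequently D descends to a differential ∂ on the quotient C = T/W with ∂ ∘ ∂ = 0. (This is the differential on the Hochschild chain model HC(M ⊗^L M) for M = A_n built from the Koszul resolution.) -/

import Mathlib

open scoped TensorProduct

abbrev F2 : Type := ZMod 2

inductive GenA (n : ℕ) : Type
  | e : Fin (n + 1) → GenA n
  | iota : Fin n → GenA n
  | x : Fin n → GenA n

inductive RelA (n : ℕ) : FreeAlgebra F2 (GenA n) → FreeAlgebra F2 (GenA n) → Prop
  | e_orth (i j : Fin (n + 1)) (h : i ≠ j) :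
      RelA n (FreeAlgebra.ι F2 (GenA.e i) * FreeAlgebra.ι F2 (GenA.e j)) 0
  | e_idem (i : Fin (n + 1)) :
      RelA n (FreeAlgebra.ι F2 (GenA.e i) * FreeAlgebra.ι F2 (GenA.e i))
        (FreeAlgebra.ι F2 (GenA.e i))
  | e_sum : RelA n (∑ i : Fin (n + 1), FreeAlgebra.ι F2 (GenA.e i)) 1
  | e_iota (i : Fin n) :
      RelA n (FreeAlgebra.ι F2 (GenA.e i.succ) * FreeAlgebra.ι F2 (GenA.iota i))
        (FreeAlgebra.ι F2 (GenA.iota i))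
  | iota_e (i : Fin n) :
      RelA n (FreeAlgebra.ι F2 (GenA.iota i) * FreeAlgebra.ι F2 (GenA.e i.castSucc))
        (FreeAlgebra.ι F2 (GenA.iota i))
  | e_x (i : Fin n) :
      RelA n (FreeAlgebra.ι F2 (GenA.e i.succ) * FreeAlgebra.ι F2 (GenA.x i))
        (FreeAlgebra.ι F2 (GenA.x i))
  | x_e (i : Fin n) :
      RelA n (FreeAlgebra.ι F2 (GenA.x i) * FreeAlgebra.ι F2 (GenA.e i.castSucc))
        (FreeAlgebra.ι F2 (GenA.x i))
  | iota_x (i j : Fin n) (h : (i : ℕ) + 1 = j) :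
      RelA n (FreeAlgebra.ι F2 (GenA.iota j) * FreeAlgebra.ι F2 (GenA.x i))
        (FreeAlgebra.ι F2 (GenA.x j) * FreeAlgebra.ι F2 (GenA.iota i))
  | x_x (i j : Fin n) (h : (i : ℕ) + 1 = j) :
      RelA n (FreeAlgebra.ι F2 (GenA.x j) * FreeAlgebra.ι F2 (GenA.x i)) 0

/-- The algebra `A_n`, a quotient of the path algebra of the quiver `G_n`. -/
abbrev AlgA (n : ℕ) : Type := RingQuot (RelA n)

noncomputable def Ae (n : ℕ) (i : Fin (n + 1)) : AlgA n :=
  RingQuot.mkAlgHom F2 (RelA n) (FreeAlgebra.ι F2 (GenA.e i))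

noncomputable def Aiota (n : ℕ) (i : Fin n) : AlgA n :=
  RingQuot.mkAlgHom F2 (RelA n) (FreeAlgebra.ι F2 (GenA.iota i))

noncomputable def Ax (n : ℕ) (i : Fin n) : AlgA n :=
  RingQuot.mkAlgHom F2 (RelA n) (FreeAlgebra.ι F2 (GenA.x i))

/-- Generators of `B_n`: idempotents `f_0, …, f_n`, and arrows `w i`, `y i` (for
`i : Fin n`) representing the generators `w_{i+1}, y_{i+1} : i+1 → i`. -/
inductive GenB (n : ℕ) : Type
  | f : Fin (n + 1) → GenB n
  | w : Fin n → GenB n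
  | y : Fin n → GenB n

inductive RelB (n : ℕ) : FreeAlgebra F2 (GenB n) → FreeAlgebra F2 (GenB n) → Prop
  | f_orth (i j : Fin (n + 1)) (h : i ≠ j) :
      RelB n (FreeAlgebra.ι F2 (GenB.f i) * FreeAlgebra.ι F2 (GenB.f j)) 0
  | f_idem (i : Fin (n + 1)) :
      RelB n (FreeAlgebra.ι F2 (GenB.f i) * FreeAlgebra.ι F2 (GenB.f i))
        (FreeAlgebra.ι F2 (GenB.f i))
  | f_sum : RelB n (∑ i : Fin (n + 1), FreeAlgebra.ι F2 (GenB.f i)) 1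
  | f_w (i : Fin n) :
      RelB n (FreeAlgebra.ι F2 (GenB.f i.castSucc) * FreeAlgebra.ι F2 (GenB.w i))
        (FreeAlgebra.ι F2 (GenB.w i))
  | w_f (i : Fin n) :
      RelB n (FreeAlgebra.ι F2 (GenB.w i) * FreeAlgebra.ι F2 (GenB.f i.succ))
        (FreeAlgebra.ι F2 (GenB.w i))
  | f_y (i : Fin n) :
      RelB n (FreeAlgebra.ι F2 (GenB.f i.castSucc) * FreeAlgebra.ι F2 (GenB.y i))
        (FreeAlgebra.ι F2 (GenB.y i))
  | y_f (i : Fin n) :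
      RelB n (FreeAlgebra.ι F2 (GenB.y i) * FreeAlgebra.ι F2 (GenB.f i.succ))
        (FreeAlgebra.ι F2 (GenB.y i))
  | w_y (i j : Fin n) (h : (i : ℕ) + 1 = j) :
      RelB n (FreeAlgebra.ι F2 (GenB.w i) * FreeAlgebra.ι F2 (GenB.y j))
        (FreeAlgebra.ι F2 (GenB.y i) * FreeAlgebra.ι F2 (GenB.w j))
  | y_y (i j : Fin n) (h : (i : ℕ) + 1 = j) :
      RelB n (FreeAlgebra.ι F2 (GenB.y i) * FreeAlgebra.ι F2 (GenB.y j)) 0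

/-- The algebra `B_n`, the quadratic dual of `A_n`. -/
abbrev AlgB (n : ℕ) : Type := RingQuot (RelB n)

noncomputable def Bf (n : ℕ) (i : Fin (n + 1)) : AlgB n :=
  RingQuot.mkAlgHom F2 (RelB n) (FreeAlgebra.ι F2 (GenB.f i))

/-- The generator `w_{i+1}` of `B_n` (for `i : Fin n`). -/
noncomputable def Bw (n : ℕ) (i : Fin n) : AlgB n :=
  RingQuot.mkAlgHom F2 (RelB n) (FreeAlgebra.ι F2 (GenB.w i))

/-- The generator `y_{i+1}` of `B_n` (for `i : Fin n`). -/
noncomputable def By (n : ℕ) (i : Fin n) : AlgB n :=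
  RingQuot.mkAlgHom F2 (RelB n) (FreeAlgebra.ι F2 (GenB.y i))

/-- `T = (A_n ⊗ B_n) ⊗ (A_n ⊗ B_n)`, the underlying space of the Hochschild chain
model `HC(M ⊗^L M)` for `M = A_n`; a pure tensor `(a₁ ⊗ b₁) ⊗ (a₂ ⊗ b₂)` represents
`a₁ | b₁ | a₂ | b₂`. -/
abbrev Tn (n : ℕ) : Type := (AlgA n ⊗[F2] AlgB n) ⊗[F2] (AlgA n ⊗[F2] AlgB n)

noncomputable instance (n : ℕ) : AddCommGroup (Tn n) := by
  unfold Tn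
  exact @TensorProduct.addCommGroup F2 _ (AlgA n ⊗[F2] AlgB n) (AlgA n ⊗[F2] AlgB n)
    TensorProduct.addCommGroup _ TensorProduct.instModule _

/-- The sum of the four insertion operations for a dual pair `(ξ, ξ')`:
`a₁⊗b₁⊗a₂⊗b₂ ↦ a₁ξ⊗ξ'b₁⊗a₂⊗b₂ + a₁⊗b₁ξ'⊗ξa₂⊗b₂ + a₁⊗b₁⊗a₂ξ⊗ξ'b₂ + ξa₁⊗b₁⊗a₂⊗b₂ξ'`. -/
noncomputable def ins (n : ℕ) (ξ : AlgA n) (ξ' : AlgB n) : Tn n →ₗ[F2] Tn n :=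
  TensorProduct.map
      (TensorProduct.map (LinearMap.mulRight F2 ξ) (LinearMap.mulLeft F2 ξ')) LinearMap.id
    + TensorProduct.map
      (TensorProduct.map LinearMap.id (LinearMap.mulRight F2 ξ'))
      (TensorProduct.map (LinearMap.mulLeft F2 ξ) LinearMap.id)
    + TensorProduct.map LinearMap.id
      (TensorProduct.map (LinearMap.mulRight F2 ξ) (LinearMap.mulLeft F2 ξ'))
    + TensorProduct.map
      (TensorProduct.map (LinearMap.mulLeft F2 ξ) LinearMap.id)
      (TensorProduct.map LinearMap.id (LinearMap.mulRight F2 ξ'))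

/-- The differential `D` on `T`, summing the insertions over the dual pairs
`(ι_i, y_{i+1})` and `(x_i, w_{i+1})` for `0 ≤ i ≤ n-1`. -/
noncomputable def Dmap (n : ℕ) : Tn n →ₗ[F2] Tn n :=
  ∑ i : Fin n, (ins n (Aiota n i) (By n i) + ins n (Ax n i) (Bw n i))

/-- The transposition `t : a₁⊗b₁⊗a₂⊗b₂ ↦ a₂⊗b₂⊗a₁⊗b₁`. -/
noncomputable def tmap (n : ℕ) : Tn n →ₗ[F2] Tn n :=
  (TensorProduct.comm F2 (AlgA n ⊗[F2] AlgB n) (AlgA n ⊗[F2] AlgB n)).toLinearMap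

/-- The generating set of the subspace `W ⊆ T` implementing the trace relation
(moving an idempotent around the cyclic tensor). -/
def Wset (n : ℕ) : Set (Tn n) :=
  {z | ∃ (a₁ a₂ : AlgA n) (b₁ b₂ : AlgB n) (k : Fin (n + 1)),
    z = ((a₁ * Ae n k) ⊗ₜ[F2] b₁) ⊗ₜ[F2] (a₂ ⊗ₜ[F2] b₂)
        - (a₁ ⊗ₜ[F2] (Bf n k * b₁)) ⊗ₜ[F2] (a₂ ⊗ₜ[F2] b₂) ∨
    z = (a₁ ⊗ₜ[F2] (b₁ * Bf n k)) ⊗ₜ[F2] (a₂ ⊗ₜ[F2] b₂)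
        - (a₁ ⊗ₜ[F2] b₁) ⊗ₜ[F2] ((Ae n k * a₂) ⊗ₜ[F2] b₂) ∨
    z = (a₁ ⊗ₜ[F2] b₁) ⊗ₜ[F2] ((a₂ * Ae n k) ⊗ₜ[F2] b₂)
        - (a₁ ⊗ₜ[F2] b₁) ⊗ₜ[F2] (a₂ ⊗ₜ[F2] (Bf n k * b₂)) ∨
    z = (a₁ ⊗ₜ[F2] b₁) ⊗ₜ[F2] (a₂ ⊗ₜ[F2] (b₂ * Bf n k))
        - ((Ae n k * a₁) ⊗ₜ[F2] b₁) ⊗ₜ[F2] (a₂ ⊗ₜ[F2] b₂)}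

/-- The subspace `W ⊆ T`; the quotient `C = T/W` is the Hochschild chain model. -/
noncomputable def Wsub (n : ℕ) : Submodule F2 (Tn n) := Submodule.span F2 (Wset n)

section Aux
variable (n : ℕ)

lemma add_self' {M : Type*} [AddCommMonoid M] [Module F2 M] (x : M) : x + x = 0 := by
  have h : ((2 : F2)) = 0 := by decide
  calc x + x = (2 : F2) • x := (two_smul F2 x).symm
    _ = 0 := by rw [h, zero_smul]

-- A-side relations
lemma AeAe {k l : Fin (n+1)} (h : k ≠ l) : Ae n k * Ae n l = 0 := by
  have := RingQuot.mkAlgHom_rel F2 (RelA.e_orth k l h)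
  simpa [Ae, map_mul] using this

lemma Ae_iota (i : Fin n) : Ae n i.succ * Aiota n i = Aiota n i := by
  have := RingQuot.mkAlgHom_rel F2 (RelA.e_iota i)
  simpa [Ae, Aiota, map_mul] using this

lemma iota_Ae (i : Fin n) : Aiota n i * Ae n i.castSucc = Aiota n i := by
  have := RingQuot.mkAlgHom_rel F2 (RelA.iota_e i)
  simpa [Ae, Aiota, map_mul] using this

lemma Ae_x (i : Fin n) : Ae n i.succ * Ax n i = Ax n i := by
  have := RingQuot.mkAlgHom_rel F2 (RelA.e_x i)
  simpa [Ae, Ax, map_mul] using this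

lemma x_Ae (i : Fin n) : Ax n i * Ae n i.castSucc = Ax n i := by
  have := RingQuot.mkAlgHom_rel F2 (RelA.x_e i)
  simpa [Ae, Ax, map_mul] using this

lemma iota_x_rel {i j : Fin n} (h : (i : ℕ) + 1 = j) :
    Aiota n j * Ax n i = Ax n j * Aiota n i := by
  have := RingQuot.mkAlgHom_rel F2 (RelA.iota_x i j h)
  simpa [Aiota, Ax, map_mul] using this

lemma x_x_rel {i j : Fin n} (h : (i : ℕ) + 1 = j) : Ax n j * Ax n i = 0 := by
  have := RingQuot.mkAlgHom_rel F2 (RelA.x_x i j h)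
  simpa [Ax, map_mul] using this

-- B-side
lemma BfBf {k l : Fin (n+1)} (h : k ≠ l) : Bf n k * Bf n l = 0 := by
  have := RingQuot.mkAlgHom_rel F2 (RelB.f_orth k l h)
  simpa [Bf, map_mul] using this

lemma Bf_w (i : Fin n) : Bf n i.castSucc * Bw n i = Bw n i := by
  have := RingQuot.mkAlgHom_rel F2 (RelB.f_w i)
  simpa [Bf, Bw, map_mul] using this

lemma w_Bf (i : Fin n) : Bw n i * Bf n i.succ = Bw n i := by
  have := RingQuot.mkAlgHom_rel F2 (RelB.w_f i)
  simpa [Bf, Bw, map_mul] using this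

lemma Bf_y (i : Fin n) : Bf n i.castSucc * By n i = By n i := by
  have := RingQuot.mkAlgHom_rel F2 (RelB.f_y i)
  simpa [Bf, By, map_mul] using this

lemma y_Bf (i : Fin n) : By n i * Bf n i.succ = By n i := by
  have := RingQuot.mkAlgHom_rel F2 (RelB.y_f i)
  simpa [Bf, By, map_mul] using this

lemma w_y_rel {i j : Fin n} (h : (i : ℕ) + 1 = j) :
    Bw n i * By n j = By n i * Bw n j := by
  have := RingQuot.mkAlgHom_rel F2 (RelB.w_y i j h)
  simpa [Bw, By, map_mul] using this

lemma y_y_rel {i j : Fin n} (h : (i : ℕ) + 1 = j) : By n i * By n j = 0 := by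
  have := RingQuot.mkAlgHom_rel F2 (RelB.y_y i j h)
  simpa [By, map_mul] using this

end Aux
section Aux2
variable (n : ℕ)

lemma succ_ne_castSucc {i j : Fin n} (h : ¬ ((i : ℕ) + 1 = (j : ℕ))) :
    i.succ ≠ j.castSucc := by
  intro hc
  apply h
  simpa [Fin.ext_iff] using hc

-- products that vanish for all indices
lemma AxAx (i j : Fin n) : Ax n i * Ax n j = 0 := by
  by_cases h : (j : ℕ) + 1 = i
  · exact x_x_rel n h
  · rw [← x_Ae n i, ← Ae_x n j, mul_assoc, ← mul_assoc (Ae n i.castSucc),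
      AeAe n (by simpa [Fin.ext_iff] using fun hc => h hc.symm : i.castSucc ≠ j.succ),
      zero_mul, mul_zero]

lemma ByBy (i j : Fin n) : By n i * By n j = 0 := by
  by_cases h : (i : ℕ) + 1 = j
  · exact y_y_rel n h
  · rw [← y_Bf n i, ← Bf_y n j, mul_assoc, ← mul_assoc (Bf n i.succ),
      BfBf n (succ_ne_castSucc n h), zero_mul, mul_zero]

lemma AxAiota0 {i j : Fin n} (h : ¬ ((j : ℕ) + 1 = i)) : Ax n i * Aiota n j = 0 := by
  rw [← x_Ae n i, ← Ae_iota n j, mul_assoc, ← mul_assoc (Ae n i.castSucc),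
    AeAe n (by simpa [Fin.ext_iff] using fun hc => h hc.symm : i.castSucc ≠ j.succ),
    zero_mul, mul_zero]

lemma AiotaAx0 {i j : Fin n} (h : ¬ ((j : ℕ) + 1 = i)) : Aiota n i * Ax n j = 0 := by
  rw [← iota_Ae n i, ← Ae_x n j, mul_assoc, ← mul_assoc (Ae n i.castSucc),
    AeAe n (by simpa [Fin.ext_iff] using fun hc => h hc.symm : i.castSucc ≠ j.succ),
    zero_mul, mul_zero]

lemma keylem {M : Type*} [AddCommMonoid M] [Module F2 M] (f : AlgA n → AlgB n → M)
    (h0 : ∀ b, f 0 b = 0) (h0' : ∀ a, f a 0 = 0) (i j : Fin n) :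
    f (Aiota n i * Aiota n j) (By n j * By n i) + f (Ax n i * Aiota n j) (By n j * Bw n i)
      + f (Aiota n i * Ax n j) (Bw n j * By n i) + f (Ax n i * Ax n j) (Bw n j * Bw n i)
      = 0 := by
  rw [ByBy, AxAx, h0', h0]
  by_cases h : (j : ℕ) + 1 = i
  · rw [iota_x_rel n h, w_y_rel n h]
    simpa using add_self' (f (Ax n i * Aiota n j) (By n j * Bw n i))
  · rw [AxAiota0 n h, AiotaAx0 n h, h0, h0]
    simp

end Aux2
section Aux3
variable (n : ℕ)

noncomputable def L1 (a : AlgA n) (b : AlgB n) : Tn n →ₗ[F2] Tn n :=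
  TensorProduct.map
      (TensorProduct.map (LinearMap.mulRight F2 a) (LinearMap.mulLeft F2 b)) LinearMap.id

noncomputable def L2 (a : AlgA n) (b : AlgB n) : Tn n →ₗ[F2] Tn n :=
  TensorProduct.map
      (TensorProduct.map LinearMap.id (LinearMap.mulRight F2 b))
      (TensorProduct.map (LinearMap.mulLeft F2 a) LinearMap.id)

noncomputable def L3 (a : AlgA n) (b : AlgB n) : Tn n →ₗ[F2] Tn n :=
  TensorProduct.map LinearMap.id
      (TensorProduct.map (LinearMap.mulRight F2 a) (LinearMap.mulLeft F2 b))

noncomputable def L4 (a : AlgA n) (b : AlgB n) : Tn n →ₗ[F2] Tn n :=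
  TensorProduct.map
      (TensorProduct.map (LinearMap.mulLeft F2 a) LinearMap.id)
      (TensorProduct.map LinearMap.id (LinearMap.mulRight F2 b))

lemma ins_eq (a : AlgA n) (b : AlgB n) :
    ins n a b = L1 n a b + L2 n a b + L3 n a b + L4 n a b := rfl

lemma L1_tmul (a : AlgA n) (b : AlgB n) (x z : AlgA n) (y w : AlgB n) :
    L1 n a b ((x ⊗ₜ[F2] y) ⊗ₜ[F2] (z ⊗ₜ[F2] w)) =
      ((x * a) ⊗ₜ[F2] (b * y)) ⊗ₜ[F2] (z ⊗ₜ[F2] w) := by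
  simp [L1]

lemma L2_tmul (a : AlgA n) (b : AlgB n) (x z : AlgA n) (y w : AlgB n) :
    L2 n a b ((x ⊗ₜ[F2] y) ⊗ₜ[F2] (z ⊗ₜ[F2] w)) =
      (x ⊗ₜ[F2] (y * b)) ⊗ₜ[F2] ((a * z) ⊗ₜ[F2] w) := by
  simp [L2]

lemma L3_tmul (a : AlgA n) (b : AlgB n) (x z : AlgA n) (y w : AlgB n) :
    L3 n a b ((x ⊗ₜ[F2] y) ⊗ₜ[F2] (z ⊗ₜ[F2] w)) =
      (x ⊗ₜ[F2] y) ⊗ₜ[F2] ((z * a) ⊗ₜ[F2] (b * w)) := by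
  simp [L3]

lemma L4_tmul (a : AlgA n) (b : AlgB n) (x z : AlgA n) (y w : AlgB n) :
    L4 n a b ((x ⊗ₜ[F2] y) ⊗ₜ[F2] (z ⊗ₜ[F2] w)) =
      ((a * x) ⊗ₜ[F2] y) ⊗ₜ[F2] (z ⊗ₜ[F2] (w * b)) := by
  simp [L4]
-- zero lemmas
lemma L1_zero_left (b : AlgB n) : L1 n 0 b = 0 := by ext x y z w; simp [L1]
lemma L1_zero_right (a : AlgA n) : L1 n a 0 = 0 := by ext x y z w; simp [L1]
lemma L2_zero_left (b : AlgB n) : L2 n 0 b = 0 := by ext x y z w; simp [L2]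
lemma L2_zero_right (a : AlgA n) : L2 n a 0 = 0 := by ext x y z w; simp [L2]
lemma L3_zero_left (b : AlgB n) : L3 n 0 b = 0 := by ext x y z w; simp [L3]
lemma L3_zero_right (a : AlgA n) : L3 n a 0 = 0 := by ext x y z w; simp [L3]
lemma L4_zero_left (b : AlgB n) : L4 n 0 b = 0 := by ext x y z w; simp [L4]
lemma L4_zero_right (a : AlgA n) : L4 n a 0 = 0 := by ext x y z w; simp [L4]

-- diagonal composition lemmas
lemma L1_mul_L1 (a a' : AlgA n) (b b' : AlgB n) :
    L1 n a b * L1 n a' b' = L1 n (a' * a) (b * b') := by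
  ext x y z w; simp [L1, mul_assoc]
lemma L2_mul_L2 (a a' : AlgA n) (b b' : AlgB n) :
    L2 n a b * L2 n a' b' = L2 n (a * a') (b' * b) := by
  ext x y z w; simp [L2, mul_assoc]
lemma L3_mul_L3 (a a' : AlgA n) (b b' : AlgB n) :
    L3 n a b * L3 n a' b' = L3 n (a' * a) (b * b') := by
  ext x y z w; simp [L3, mul_assoc]
lemma L4_mul_L4 (a a' : AlgA n) (b b' : AlgB n) :
    L4 n a b * L4 n a' b' = L4 n (a * a') (b' * b) := by
  ext x y z w; simp [L4, mul_assoc]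

-- commutation lemmas
lemma L1_comm_L2 (a a' : AlgA n) (b b' : AlgB n) :
    L1 n a b * L2 n a' b' = L2 n a' b' * L1 n a b := by
  ext x y z w; simp [L1, L2, mul_assoc]
lemma L1_comm_L3 (a a' : AlgA n) (b b' : AlgB n) :
    L1 n a b * L3 n a' b' = L3 n a' b' * L1 n a b := by
  ext x y z w; simp [L1, L3, mul_assoc]
lemma L1_comm_L4 (a a' : AlgA n) (b b' : AlgB n) :
    L1 n a b * L4 n a' b' = L4 n a' b' * L1 n a b := by
  ext x y z w; simp [L1, L4, mul_assoc]
lemma L2_comm_L3 (a a' : AlgA n) (b b' : AlgB n) :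
    L2 n a b * L3 n a' b' = L3 n a' b' * L2 n a b := by
  ext x y z w; simp [L2, L3, mul_assoc]
lemma L2_comm_L4 (a a' : AlgA n) (b b' : AlgB n) :
    L2 n a b * L4 n a' b' = L4 n a' b' * L2 n a b := by
  ext x y z w; simp [L2, L4, mul_assoc]
lemma L3_comm_L4 (a a' : AlgA n) (b b' : AlgB n) :
    L3 n a b * L4 n a' b' = L4 n a' b' * L3 n a b := by
  ext x y z w; simp [L3, L4, mul_assoc]

-- the ds summation machinery
noncomputable def ds {M : Type*} [AddCommMonoid M] (f : AlgA n → AlgB n → M) : M :=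
  ∑ i : Fin n, (f (Aiota n i) (By n i) + f (Ax n i) (Bw n i))

lemma Dmap_eq : Dmap n = ds n (ins n) := rfl

lemma ds_add {M : Type*} [AddCommMonoid M] (f g : AlgA n → AlgB n → M) :
    ds n (fun a b => f a b + g a b) = ds n f + ds n g := by
  unfold ds
  rw [← Finset.sum_add_distrib]
  exact Finset.sum_congr rfl fun i _ => add_add_add_comm _ _ _ _

lemma ds_mul (f g : AlgA n → AlgB n → Module.End F2 (Tn n)) :
    ds n f * ds n g = ds n (fun a b => ds n (fun a' b' => f a b * g a' b')) := by
  unfold ds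
  rw [Finset.sum_mul_sum]
  refine Finset.sum_congr rfl fun j _ => ?_
  rw [← Finset.sum_add_distrib]
  refine Finset.sum_congr rfl fun i _ => ?_
  simp only [add_mul, mul_add]
  abel

lemma ds_ds_eq_zero {M : Type*} [AddCommMonoid M] (F : AlgA n → AlgB n → AlgA n → AlgB n → M)
    (h : ∀ i j : Fin n,
      F (Aiota n j) (By n j) (Aiota n i) (By n i)
        + F (Aiota n j) (By n j) (Ax n i) (Bw n i)
        + F (Ax n j) (Bw n j) (Aiota n i) (By n i)
        + F (Ax n j) (Bw n j) (Ax n i) (Bw n i) = 0) :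
    ds n (fun a b => ds n (fun a' b' => F a b a' b')) = 0 := by
  unfold ds
  refine Finset.sum_eq_zero fun j _ => ?_
  rw [← Finset.sum_add_distrib]
  refine Finset.sum_eq_zero fun i _ => ?_
  have := h i j
  calc F (Aiota n j) (By n j) (Aiota n i) (By n i) + F (Aiota n j) (By n j) (Ax n i) (Bw n i)
        + (F (Ax n j) (Bw n j) (Aiota n i) (By n i) + F (Ax n j) (Bw n j) (Ax n i) (Bw n i))
      = F (Aiota n j) (By n j) (Aiota n i) (By n i) + F (Aiota n j) (By n j) (Ax n i) (Bw n i)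
        + F (Ax n j) (Bw n j) (Aiota n i) (By n i) + F (Ax n j) (Bw n j) (Ax n i) (Bw n i) := by
        abel
    _ = 0 := this

lemma ds_ds_comm {M : Type*} [AddCommMonoid M] (F : AlgA n → AlgB n → AlgA n → AlgB n → M) :
    ds n (fun a b => ds n (fun a' b' => F a b a' b'))
      = ds n (fun a b => ds n (fun a' b' => F a' b' a b)) := by
  unfold ds
  simp only [← Finset.sum_add_distrib]
  rw [Finset.sum_comm]
  exact Finset.sum_congr rfl fun i _ => Finset.sum_congr rfl fun j _ => by abel

lemma C11 : ds n (fun a b => ds n (fun a' b' => L1 n a b * L1 n a' b')) = 0 := by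
  simp only [L1_mul_L1]
  exact ds_ds_eq_zero n _ (fun i j =>
    keylem n (L1 n) (L1_zero_left n) (L1_zero_right n) i j)

lemma C33 : ds n (fun a b => ds n (fun a' b' => L3 n a b * L3 n a' b')) = 0 := by
  simp only [L3_mul_L3]
  exact ds_ds_eq_zero n _ (fun i j =>
    keylem n (L3 n) (L3_zero_left n) (L3_zero_right n) i j)

lemma C22 : ds n (fun a b => ds n (fun a' b' => L2 n a b * L2 n a' b')) = 0 := by
  simp only [L2_mul_L2]
  refine ds_ds_eq_zero n _ (fun i j => ?_)
  have := keylem n (L2 n) (L2_zero_left n) (L2_zero_right n) j i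
  calc L2 n (Aiota n j * Aiota n i) (By n i * By n j)
        + L2 n (Aiota n j * Ax n i) (Bw n i * By n j)
        + L2 n (Ax n j * Aiota n i) (By n i * Bw n j)
        + L2 n (Ax n j * Ax n i) (Bw n i * Bw n j)
      = L2 n (Aiota n j * Aiota n i) (By n i * By n j)
        + L2 n (Ax n j * Aiota n i) (By n i * Bw n j)
        + L2 n (Aiota n j * Ax n i) (Bw n i * By n j)
        + L2 n (Ax n j * Ax n i) (Bw n i * Bw n j) := by abel
    _ = 0 := this

lemma C44 : ds n (fun a b => ds n (fun a' b' => L4 n a b * L4 n a' b')) = 0 := by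
  simp only [L4_mul_L4]
  refine ds_ds_eq_zero n _ (fun i j => ?_)
  have := keylem n (L4 n) (L4_zero_left n) (L4_zero_right n) j i
  calc L4 n (Aiota n j * Aiota n i) (By n i * By n j)
        + L4 n (Aiota n j * Ax n i) (Bw n i * By n j)
        + L4 n (Ax n j * Aiota n i) (By n i * Bw n j)
        + L4 n (Ax n j * Ax n i) (Bw n i * Bw n j)
      = L4 n (Aiota n j * Aiota n i) (By n i * By n j)
        + L4 n (Ax n j * Aiota n i) (By n i * Bw n j)
        + L4 n (Aiota n j * Ax n i) (Bw n i * By n j)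
        + L4 n (Ax n j * Ax n i) (Bw n i * Bw n j) := by abel
    _ = 0 := this

lemma C21 : ds n (fun a b => ds n (fun a' b' => L2 n a b * L1 n a' b'))
    = ds n (fun a b => ds n (fun a' b' => L1 n a b * L2 n a' b')) := by
  simp only [← L1_comm_L2]
  exact ds_ds_comm n _

lemma C31 : ds n (fun a b => ds n (fun a' b' => L3 n a b * L1 n a' b'))
    = ds n (fun a b => ds n (fun a' b' => L1 n a b * L3 n a' b')) := by
  simp only [← L1_comm_L3]
  exact ds_ds_comm n _

lemma C41 : ds n (fun a b => ds n (fun a' b' => L4 n a b * L1 n a' b'))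
    = ds n (fun a b => ds n (fun a' b' => L1 n a b * L4 n a' b')) := by
  simp only [← L1_comm_L4]
  exact ds_ds_comm n _

lemma C32 : ds n (fun a b => ds n (fun a' b' => L3 n a b * L2 n a' b'))
    = ds n (fun a b => ds n (fun a' b' => L2 n a b * L3 n a' b')) := by
  simp only [← L2_comm_L3]
  exact ds_ds_comm n _

lemma C42 : ds n (fun a b => ds n (fun a' b' => L4 n a b * L2 n a' b'))
    = ds n (fun a b => ds n (fun a' b' => L2 n a b * L4 n a' b')) := by
  simp only [← L2_comm_L4]
  exact ds_ds_comm n _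

lemma C43 : ds n (fun a b => ds n (fun a' b' => L4 n a b * L3 n a' b'))
    = ds n (fun a b => ds n (fun a' b' => L3 n a b * L4 n a' b')) := by
  simp only [← L3_comm_L4]
  exact ds_ds_comm n _

lemma DD : Dmap n * Dmap n = 0 := by
  rw [Dmap_eq, ds_mul]
  simp only [ins_eq, add_mul, mul_add]
  simp only [ds_add]
  rw [C11, C22, C33, C44, C21, C31, C41, C32, C42, C43]
  abel_nf
  have h2 : ∀ x : Tn n →ₗ[F2] Tn n, (2:ℤ) • x = 0 := fun x => by
    rw [two_smul]; exact add_self' x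
  simp only [h2, add_zero, zero_add]

-- membership of the four generator families
lemma mem1 (a1 a2 : AlgA n) (b1 b2 : AlgB n) (k : Fin (n+1)) :
    ((a1 * Ae n k) ⊗ₜ[F2] b1) ⊗ₜ[F2] (a2 ⊗ₜ[F2] b2)
      - (a1 ⊗ₜ[F2] (Bf n k * b1)) ⊗ₜ[F2] (a2 ⊗ₜ[F2] b2) ∈ Wsub n :=
  Submodule.subset_span ⟨a1, a2, b1, b2, k, Or.inl rfl⟩

lemma mem2 (a1 a2 : AlgA n) (b1 b2 : AlgB n) (k : Fin (n+1)) :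
    (a1 ⊗ₜ[F2] (b1 * Bf n k)) ⊗ₜ[F2] (a2 ⊗ₜ[F2] b2)
      - (a1 ⊗ₜ[F2] b1) ⊗ₜ[F2] ((Ae n k * a2) ⊗ₜ[F2] b2) ∈ Wsub n :=
  Submodule.subset_span ⟨a1, a2, b1, b2, k, Or.inr (Or.inl rfl)⟩

lemma mem3 (a1 a2 : AlgA n) (b1 b2 : AlgB n) (k : Fin (n+1)) :
    (a1 ⊗ₜ[F2] b1) ⊗ₜ[F2] ((a2 * Ae n k) ⊗ₜ[F2] b2)
      - (a1 ⊗ₜ[F2] b1) ⊗ₜ[F2] (a2 ⊗ₜ[F2] (Bf n k * b2)) ∈ Wsub n :=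
  Submodule.subset_span ⟨a1, a2, b1, b2, k, Or.inr (Or.inr (Or.inl rfl))⟩

lemma mem4 (a1 a2 : AlgA n) (b1 b2 : AlgB n) (k : Fin (n+1)) :
    (a1 ⊗ₜ[F2] b1) ⊗ₜ[F2] (a2 ⊗ₜ[F2] (b2 * Bf n k))
      - ((Ae n k * a1) ⊗ₜ[F2] b1) ⊗ₜ[F2] (a2 ⊗ₜ[F2] b2) ∈ Wsub n :=
  Submodule.subset_span ⟨a1, a2, b1, b2, k, Or.inr (Or.inr (Or.inr rfl))⟩

set_option maxHeartbeats 2000000 in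
lemma stab (ξ : AlgA n) (ξ' : AlgB n) (i : Fin n)
    (hA1 : Ae n i.succ * ξ = ξ) (hA2 : ξ * Ae n i.castSucc = ξ)
    (hB1 : Bf n i.castSucc * ξ' = ξ') (hB2 : ξ' * Bf n i.succ = ξ')
    {z : Tn n} (hz : z ∈ Wset n) : ins n ξ ξ' z ∈ Wsub n := by
  have hA1' : ∀ k, k ≠ i.succ → Ae n k * ξ = 0 := fun k hk => by
    rw [← hA1, ← mul_assoc, AeAe n hk, zero_mul]
  have hA2' : ∀ k, k ≠ i.castSucc → ξ * Ae n k = 0 := fun k hk => by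
    rw [← hA2, mul_assoc, AeAe n (Ne.symm hk), mul_zero]
  have hB1' : ∀ k, k ≠ i.castSucc → Bf n k * ξ' = 0 := fun k hk => by
    rw [← hB1, ← mul_assoc, BfBf n hk, zero_mul]
  have hB2' : ∀ k, k ≠ i.succ → ξ' * Bf n k = 0 := fun k hk => by
    rw [← hB2, mul_assoc, BfBf n (Ne.symm hk), mul_zero]
  obtain ⟨a1, a2, b1, b2, k, h | h | h | h⟩ := hz <;> subst h <;>
    rw [ins_eq, LinearMap.add_apply, LinearMap.add_apply, LinearMap.add_apply] <;>
    refine add_mem (add_mem (add_mem ?_ ?_) ?_) ?_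
  -- form 1
  · -- L1, critical
    rw [map_sub, L1_tmul, L1_tmul]
    by_cases hk : k = i.succ
    · subst hk
      rw [mul_assoc a1, hA1, ← mul_assoc ξ', hB2, sub_self]
      exact zero_mem _
    · rw [mul_assoc a1, hA1' k hk, ← mul_assoc ξ', hB2' k hk]
      simp
  · -- L2
    rw [map_sub, L2_tmul, L2_tmul, mul_assoc (Bf n k)]
    exact mem1 n a1 (ξ * a2) (b1 * ξ') b2 k
  · -- L3
    rw [map_sub, L3_tmul, L3_tmul]
    exact mem1 n a1 (a2 * ξ) b1 (ξ' * b2) k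
  · -- L4
    rw [map_sub, L4_tmul, L4_tmul, ← mul_assoc ξ a1]
    exact mem1 n (ξ * a1) a2 b1 (b2 * ξ') k
  -- form 2
  · -- L1
    rw [map_sub, L1_tmul, L1_tmul, ← mul_assoc ξ' b1]
    exact mem2 n (a1 * ξ) a2 (ξ' * b1) b2 k
  · -- L2, critical
    rw [map_sub, L2_tmul, L2_tmul]
    by_cases hk : k = i.castSucc
    · subst hk
      rw [mul_assoc b1, hB1, ← mul_assoc ξ, hA2, sub_self]
      exact zero_mem _
    · rw [mul_assoc b1, hB1' k hk, ← mul_assoc ξ, hA2' k hk]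
      simp
  · -- L3
    rw [map_sub, L3_tmul, L3_tmul, mul_assoc (Ae n k)]
    exact mem2 n a1 (a2 * ξ) b1 (ξ' * b2) k
  · -- L4
    rw [map_sub, L4_tmul, L4_tmul]
    exact mem2 n (ξ * a1) a2 b1 (b2 * ξ') k
  -- form 3
  · -- L1
    rw [map_sub, L1_tmul, L1_tmul]
    exact mem3 n (a1 * ξ) a2 (ξ' * b1) b2 k
  · -- L2
    rw [map_sub, L2_tmul, L2_tmul, ← mul_assoc ξ a2]
    exact mem3 n a1 (ξ * a2) (b1 * ξ') b2 k
  · -- L3, critical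
    rw [map_sub, L3_tmul, L3_tmul]
    by_cases hk : k = i.succ
    · subst hk
      rw [mul_assoc a2, hA1, ← mul_assoc ξ', hB2, sub_self]
      exact zero_mem _
    · rw [mul_assoc a2, hA1' k hk, ← mul_assoc ξ', hB2' k hk]
      simp
  · -- L4
    rw [map_sub, L4_tmul, L4_tmul, mul_assoc (Bf n k)]
    exact mem3 n (ξ * a1) a2 b1 (b2 * ξ') k
  -- form 4
  · -- L1
    rw [map_sub, L1_tmul, L1_tmul, mul_assoc (Ae n k)]
    exact mem4 n (a1 * ξ) a2 (ξ' * b1) b2 k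
  · -- L2
    rw [map_sub, L2_tmul, L2_tmul]
    exact mem4 n a1 (ξ * a2) (b1 * ξ') b2 k
  · -- L3
    rw [map_sub, L3_tmul, L3_tmul, ← mul_assoc ξ' b2]
    exact mem4 n a1 (a2 * ξ) b1 (ξ' * b2) k
  · -- L4, critical
    rw [map_sub, L4_tmul, L4_tmul]
    by_cases hk : k = i.castSucc
    · subst hk
      rw [mul_assoc b2, hB1, ← mul_assoc ξ, hA2, sub_self]
      exact zero_mem _
    · rw [mul_assoc b2, hB1' k hk, ← mul_assoc ξ, hA2' k hk]
      simp

lemma part2 : (Wsub n).map (Dmap n) ≤ Wsub n := by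
  rw [Wsub, Submodule.map_span, Submodule.span_le]
  rintro _ ⟨z, hz, rfl⟩
  show Dmap n z ∈ Wsub n
  rw [Dmap, LinearMap.sum_apply]
  refine Submodule.sum_mem _ fun i _ => ?_
  rw [LinearMap.add_apply]
  exact add_mem
    (stab n _ _ i (Ae_iota n i) (iota_Ae n i) (Bf_y n i) (y_Bf n i) hz)
    (stab n _ _ i (Ae_x n i) (x_Ae n i) (Bf_w n i) (w_Bf n i) hz)

end Aux3

theorem stmt_6 (n : ℕ) (hn : 1 ≤ n) :
    (Dmap n).comp (Dmap n) = 0 ∧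
    (Wsub n).map (Dmap n) ≤ Wsub n ∧
    ∃ bd : (Tn n ⧸ Wsub n) →ₗ[F2] Tn n ⧸ Wsub n,
      bd.comp (Wsub n).mkQ = (Wsub n).mkQ.comp (Dmap n) ∧ bd.comp bd = 0 := by
  have hDD : (Dmap n).comp (Dmap n) = 0 := by
    have := DD n
    rwa [Module.End.mul_eq_comp] at this
  have hW : (Wsub n).map (Dmap n) ≤ Wsub n := part2 n
  refine ⟨hDD, hW, ?_⟩
  have hle : Wsub n ≤ (Wsub n).comap (Dmap n) := Submodule.map_le_iff_le_comap.mp hW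
  refine ⟨Submodule.mapQ (Wsub n) (Wsub n) (Dmap n) hle, Submodule.mapQ_mkQ (Wsub n) (Wsub n) (Dmap n), ?_⟩
  apply Submodule.linearMap_qext
  rw [LinearMap.comp_assoc, Submodule.mapQ_mkQ, ← LinearMap.comp_assoc,
    Submodule.mapQ_mkQ, LinearMap.comp_assoc, hDD, LinearMap.comp_zero,
    LinearMap.zero_comp]
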